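/- arXiv:1912.09798 — 4 statements merged into one kernel-verified Lean document; each statement's English description precedes it below -/
import Mathlib

section
/- For the moment curve Γ(ξ) = (ξ, ξ², ..., ξᵏ) in ℝᵏ and any 0 ≤ l ≤ k, the absolute value of the determinant of the k×k matrix whose first l rows are ∂¹Γ(ξ₁), ..., ∂ˡΓ(ξ₁) and whose remaining k−l rows are ∂¹Γ(ξ₂), ..., ∂^{k−l}Γ(ξ₂) equals c_{k,l} · |ξ₂ − ξ₁|^{l(k−l)}, where c_{k,l} = (k choose l) · (∏_{i=1}^{l} i!) · (∏_{j=1}^{k−l} j!). In particular it is bounded below by a positive constant (depending only on k, l) times |ξ₁ − ξ₂|^{l(k−l)}. -/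
/-!
Translating by `ξ₁` multiplies every `∂ⁱΓ` (`i ≥ 1`) on the right by a unipotent Taylor-shift
matrix, so we may take `ξ₁ = 0`. Since `∂ⁱΓ(0) = i! eᵢ`, the matrix is then block lower
triangular; its lower right block has entries `(l+m+1)_{(j+1)} t^{l+m-j}` with `t = ξ₂ - ξ₁`
(falling factorials). Scaling rows by `t^{-(j+1)}` and columns by `t^{l+m+1}` removes the powers
of `t` (the case `t = 0` follows by continuity), and after pulling out the factors `l+m+1` the
falling factorials form a Vandermonde determinant in the nodes `l, …, l+n-1`.
-/

/-- The `i`-th derivative of the moment curve `Γ(ξ) = (ξ, ξ², …, ξᵏ)` in `ℝᵏ`: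
its `j`-th coordinate (1-indexed `j`) is `j(j-1)⋯(j-i+1) ξ^{j-i}` (zero if `i > j`). -/
noncomputable def dGamma (k i : ℕ) (ξ : ℝ) : Fin k → ℝ :=
  fun j => (Nat.descFactorial ((j : ℕ) + 1) i : ℝ) * ξ ^ ((j : ℕ) + 1 - i)

open Finset Matrix Polynomial
open scoped Nat

theorem det_dGamma_succ (k : ℕ) (ξ : ℝ) :
    (of fun r c : Fin k => dGamma k (r + 1) ξ c).det = ∏ i ∈ Icc 1 k, (i ! : ℝ) := by
  rw [det_of_isUpperTriangular]
  · simp only [of_apply, dGamma, Nat.descFactorial_self, tsub_self, pow_zero, mul_one]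
    rw [← Nat.cast_prod, ← Nat.cast_prod, Nat.prod_Icc_factorial, ← Nat.prod_range_factorial_succ,
      Fin.prod_univ_eq_prod_range (fun i => (i + 1) !)]
  · intro r c (hcr : c < r)
    simp only [of_apply, dGamma]
    rw [Nat.descFactorial_of_lt (by simpa using hcr), Nat.cast_zero, zero_mul]

/-- The matrix of `p ↦ p(· + a)` on the span of `X, X², …, Xᵏ`, minus its constant part. -/
noncomputable def taylorShift (k : ℕ) (a : ℝ) : Matrix (Fin k) (Fin k) ℝ :=
  of fun m c => (((c : ℕ) + 1).choose (m + 1) : ℝ) * a ^ ((c : ℕ) - m)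

theorem det_taylorShift (k : ℕ) (a : ℝ) : (taylorShift k a).det = 1 := by
  rw [det_of_isUpperTriangular]
  · simp [taylorShift]
  · intro m c hcm
    simp [taylorShift, Nat.choose_eq_zero_of_lt (show (c : ℕ) + 1 < m + 1 by simpa using hcm)]

theorem X_add_C_pow_succ (a : ℝ) (c : ℕ) :
    (X + C a) ^ (c + 1) = C (a ^ (c + 1))
      + ∑ m ∈ range (c + 1), C ((c + 1).choose (m + 1) * a ^ (c - m)) * X ^ (m + 1) := by
  rw [add_pow, sum_range_succ', add_comm]
  simp only [pow_zero, one_mul, Nat.choose_zero_right, Nat.cast_one, mul_one, Nat.sub_zero,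
    Nat.add_sub_add_right, map_mul, map_pow, map_natCast]
  exact congrArg _ (sum_congr rfl fun m _ => by ring)

theorem dGamma_add {k i : ℕ} (hi : 0 < i) (x a : ℝ) :
    dGamma k i (x + a) = dGamma k i x ᵥ* taylorShift k a := by
  ext c
  have hc := c.isLt
  calc dGamma k i (x + a) c = (derivative^[i] ((X + C a) ^ ((c : ℕ) + 1))).eval x := by
        simp [dGamma, iterate_derivative_X_add_pow]
    _ = ∑ m ∈ range (c + 1), ((c : ℕ) + 1).choose (m + 1) * a ^ ((c : ℕ) - m)
          * (m + 1).descFactorial i * x ^ (m + 1 - i) := by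
        rw [X_add_C_pow_succ, iterate_map_add, iterate_derivative_C hi, iterate_derivative_sum]
        simp only [iterate_derivative_C_mul, iterate_derivative_X_pow_eq_smul, zero_add,
          eval_finsetSum, eval_mul, eval_C, eval_smul, eval_pow, eval_X, smul_eq_mul]
        exact sum_congr rfl fun m _ => by ring
    _ = ∑ m ∈ range k, ((c : ℕ) + 1).choose (m + 1) * a ^ ((c : ℕ) - m)
          * (m + 1).descFactorial i * x ^ (m + 1 - i) := by
        refine sum_subset (range_subset_range.2 hc) fun m _ hm => ?_
        simp [Nat.choose_eq_zero_of_lt (show (c : ℕ) + 1 < m + 1 by simp at hm; omega)]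
    _ = _ := by
        simp only [vecMul, dotProduct, dGamma, taylorShift, of_apply]
        rw [Fin.sum_univ_eq_sum_range (fun m => ((m + 1).descFactorial i : ℝ) * x ^ (m + 1 - i)
          * (((c : ℕ) + 1).choose (m + 1) * a ^ ((c : ℕ) - m)))]
        exact sum_congr rfl fun m _ => by ring

noncomputable def transversalMatrix (k l : ℕ) (ξ₁ ξ₂ : ℝ) : Matrix (Fin k) (Fin k) ℝ :=
  of fun r c => if (r : ℕ) < l then dGamma k (r + 1) ξ₁ c else dGamma k (r - l + 1) ξ₂ c

theorem transversalMatrix_eq_mul_taylorShift (k l : ℕ) (ξ₁ ξ₂ : ℝ) :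
    transversalMatrix k l ξ₁ ξ₂ = transversalMatrix k l 0 (ξ₂ - ξ₁) * taylorShift k ξ₁ := by
  ext r c
  have hrow (i : ℕ) (x : ℝ) : dGamma k (i + 1) (x + ξ₁) c
      = ∑ m, dGamma k (i + 1) x m * taylorShift k ξ₁ m c :=
    congrFun (dGamma_add i.succ_pos x ξ₁) c
  simp only [transversalMatrix, mul_apply, of_apply]
  split_ifs
  · simpa using hrow r 0
  · simpa using hrow (r - l) (ξ₂ - ξ₁)

theorem det_transversalMatrix_zero_left (l n : ℕ) (t : ℝ) :
    (transversalMatrix (l + n) l 0 t).det = (of fun r c : Fin l => dGamma l (r + 1) 0 c).det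
      * (of fun j m : Fin n => dGamma (l + n) (j + 1) t (Fin.natAdd l m)).det := by
  rw [← det_submatrix_equiv_self finSumFinEquiv, ← det_fromBlocks_zero₁₂]
  congr 1
  ext (i | j) (i' | m)
  · simp [transversalMatrix, dGamma]
  · simp only [transversalMatrix, dGamma, submatrix_apply, finSumFinEquiv_apply_left,
      finSumFinEquiv_apply_right, of_apply, Fin.val_castAdd, Fin.is_lt, ↓reduceIte, Fin.val_natAdd,
      fromBlocks_apply₁₂, Matrix.zero_apply]
    rw [zero_pow (by omega), mul_zero]
  · rfl
  · simp only [transversalMatrix, submatrix_apply, finSumFinEquiv_apply_right, of_apply,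
      Fin.val_natAdd, add_lt_iff_neg_left, not_lt_zero, ↓reduceIte, add_tsub_cancel_left]
    rfl

theorem det_descFactorial (l n : ℕ) :
    (of fun j m : Fin n => ((l + m + 1).descFactorial (j + 1) : ℝ)).det
      = (l + n).choose l * ∏ j ∈ Icc 1 n, (j ! : ℝ) := by
  rcases n with _ | n
  · simp
  have hcol : (of fun j m : Fin (n + 1) => ((l + m + 1).descFactorial (j + 1) : ℝ))ᵀ
      = diagonal (fun m : Fin (n + 1) => ((l + m + 1 : ℕ) : ℝ))
          * of fun (m j : Fin (n + 1)) => (descPochhammer ℝ j).eval ((m : ℝ) + l) := by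
    ext m j
    rw [diagonal_mul, transpose_apply, of_apply, of_apply, Nat.succ_descFactorial_succ,
      show (m : ℝ) + l = ((l + m : ℕ) : ℝ) by push_cast; ring, descPochhammer_eval_eq_descFactorial]
    push_cast
    ring
  rw [← det_transpose, hcol, det_mul, det_diagonal,
    ← det_eval_matrixOfPolynomials_eq_det_vandermonde _ _ (fun j => descPochhammer_natDegree ℝ j)
      (fun j => monic_descPochhammer ℝ j),
    det_vandermonde_add, det_vandermonde_id_eq_superFactorial]
  norm_cast
  rw [Fin.prod_univ_eq_prod_range (fun m => l + m + 1), Nat.prod_Icc_factorial,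
    Nat.superFactorial_succ, Nat.choose_symm_add]
  have hasc : ∏ m ∈ range (n + 1), (l + m + 1) = (l + 1).ascFactorial (n + 1) := by
    rw [Nat.ascFactorial_eq_prod_range]
    exact prod_congr rfl fun m _ => by ring
  rw [hasc, Nat.ascFactorial_eq_factorial_mul_choose]
  ring

theorem det_dGamma_natAdd (l n : ℕ) (t : ℝ) :
    (of fun j m : Fin n => dGamma (l + n) (j + 1) t (Fin.natAdd l m)).det
      = t ^ (l * n) * (of fun j m : Fin n => ((l + m + 1).descFactorial (j + 1) : ℝ)).det := by
  revert t
  rw [← funext_iff]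
  refine Continuous.ext_on (dense_compl_singleton 0) (by unfold dGamma; fun_prop) (by fun_prop)
    fun t (ht : t ≠ 0) => ?_
  have hscale : (of fun j m : Fin n => dGamma (l + n) (j + 1) t (Fin.natAdd l m))
      = diagonal (fun j : Fin n => (t ^ ((j : ℕ) + 1))⁻¹)
          * (of fun j m : Fin n => ((l + m + 1).descFactorial (j + 1) : ℝ))
          * diagonal (fun m : Fin n => t ^ (l + (m : ℕ) + 1)) := by
    ext j m
    simp only [mul_diagonal, diagonal_mul, of_apply, dGamma, Fin.val_natAdd]
    rcases le_or_gt ((j : ℕ) + 1) (l + m + 1) with hjm | hjm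
    · rw [pow_sub₀ t ht hjm]
      ring
    · rw [Nat.descFactorial_of_lt hjm]
      simp
  have hpow : ∏ m : Fin n, t ^ (l + (m : ℕ) + 1)
      = t ^ (l * n) * ∏ j : Fin n, t ^ ((j : ℕ) + 1) := by
    simp only [add_assoc, pow_add, prod_mul_distrib, prod_const, card_univ, Fintype.card_fin,
      ← pow_mul]
  rw [hscale, det_mul, det_mul, det_diagonal, det_diagonal, hpow, prod_inv_distrib]
  have : ∏ j : Fin n, t ^ ((j : ℕ) + 1) ≠ 0 := prod_ne_zero_iff.2 fun j _ => pow_ne_zero _ ht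
  field_simp

theorem det_transversalMatrix {k l : ℕ} (hl : l ≤ k) (ξ₁ ξ₂ : ℝ) :
    (transversalMatrix k l ξ₁ ξ₂).det
      = k.choose l * (∏ i ∈ Icc 1 l, (i ! : ℝ)) * (∏ j ∈ Icc 1 (k - l), (j ! : ℝ))
          * (ξ₂ - ξ₁) ^ (l * (k - l)) := by
  obtain ⟨n, rfl⟩ := Nat.exists_eq_add_of_le hl
  rw [transversalMatrix_eq_mul_taylorShift, det_mul, det_taylorShift, mul_one,
    det_transversalMatrix_zero_left, det_dGamma_succ, det_dGamma_natAdd, det_descFactorial,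
    Nat.add_sub_cancel_left]
  ring

theorem moment_curve_transversality_general (k l : ℕ) (hl : l ≤ k) :
    (∀ ξ₁ ξ₂ : ℝ,
      |(Matrix.of (fun r c : Fin k =>
          if (r : ℕ) < l then dGamma k ((r : ℕ) + 1) ξ₁ c
          else dGamma k ((r : ℕ) - l + 1) ξ₂ c)).det|
        = (Nat.choose k l : ℝ) * (∏ i ∈ Finset.Icc 1 l, (Nat.factorial i : ℝ))
            * (∏ j ∈ Finset.Icc 1 (k - l), (Nat.factorial j : ℝ))
            * |ξ₂ - ξ₁| ^ (l * (k - l)))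
    ∧ ∃ c : ℝ, 0 < c ∧ ∀ ξ₁ ξ₂ : ℝ,
        c * |ξ₁ - ξ₂| ^ (l * (k - l))
          ≤ |(Matrix.of (fun r c' : Fin k =>
              if (r : ℕ) < l then dGamma k ((r : ℕ) + 1) ξ₁ c'
              else dGamma k ((r : ℕ) - l + 1) ξ₂ c')).det| := by
  have hc : 0 < (k.choose l : ℝ) * (∏ i ∈ Icc 1 l, (i ! : ℝ)) * (∏ j ∈ Icc 1 (k - l), (j ! : ℝ)) :=
    mul_pos (mul_pos (by exact_mod_cast Nat.choose_pos hl) (prod_pos fun i _ => by positivity))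
      (prod_pos fun j _ => by positivity)
  have habs (ξ₁ ξ₂ : ℝ) : |(transversalMatrix k l ξ₁ ξ₂).det|
      = k.choose l * (∏ i ∈ Icc 1 l, (i ! : ℝ)) * (∏ j ∈ Icc 1 (k - l), (j ! : ℝ))
          * |ξ₂ - ξ₁| ^ (l * (k - l)) := by
    rw [det_transversalMatrix hl, abs_mul, abs_pow, abs_of_pos hc]
  exact ⟨habs, _, hc, fun ξ₁ ξ₂ => by rw [abs_sub_comm]; exact (habs ξ₁ ξ₂).ge⟩

/-- Lemma 3.5 (transversality): the determinant whose first `l` rows are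
`∂¹Γ(ξ₁), …, ∂ˡΓ(ξ₁)` and remaining `k-l` rows are `∂¹Γ(ξ₂), …, ∂^{k-l}Γ(ξ₂)`
has absolute value `c_{k,l} |ξ₂ - ξ₁|^{l(k-l)}` with
`c_{k,l} = C(k,l) ∏_{i=1}^l i! ∏_{j=1}^{k-l} j!`; in particular it is bounded
below by a positive constant (depending only on `k, l`) times `|ξ₁-ξ₂|^{l(k-l)}`. -/
theorem moment_curve_transversality (k l : ℕ) (hk : 1 ≤ k) (hl : l ≤ k) :
    (∀ ξ₁ ξ₂ : ℝ,
      |(Matrix.of (fun r c : Fin k =>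
          if (r : ℕ) < l then dGamma k ((r : ℕ) + 1) ξ₁ c
          else dGamma k ((r : ℕ) - l + 1) ξ₂ c)).det|
        = (Nat.choose k l : ℝ) * (∏ i ∈ Finset.Icc 1 l, (Nat.factorial i : ℝ))
            * (∏ j ∈ Finset.Icc 1 (k - l), (Nat.factorial j : ℝ))
            * |ξ₂ - ξ₁| ^ (l * (k - l)))
    ∧ ∃ c : ℝ, 0 < c ∧ ∀ ξ₁ ξ₂ : ℝ,
        c * |ξ₁ - ξ₂| ^ (l * (k - l))
          ≤ |(Matrix.of (fun r c' : Fin k =>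
              if (r : ℕ) < l then dGamma k ((r : ℕ) + 1) ξ₁ c'
              else dGamma k ((r : ℕ) - l + 1) ξ₂ c')).det| :=
  moment_curve_transversality_general k l hl
end

section
/- For the moment curve Γ in ℝᵏ, the determinant of the k×k matrix with rows ∂¹Γ(0), ..., ∂ˡΓ(0), ∂¹Γ(1), ..., ∂^{k−l}Γ(1) has absolute value equal to (k choose l) · (∏_{i=1}^{l} i!) · (∏_{j=1}^{k−l} j!). -/
open Finset Matrix Nat

lemma dGamma_zero_apply (k i : ℕ) (j : Fin k) :
    dGamma k i 0 j = if (j : ℕ) + 1 = i then (i ! : ℝ) else 0 := by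
  unfold dGamma
  split_ifs with h
  · rw [← h, Nat.sub_self, pow_zero, mul_one, descFactorial_self]
  · rcases lt_or_gt_of_ne h with h | h
    · simp [descFactorial_eq_zero_iff_lt.mpr h]
    · simp [zero_pow (by omega : (j : ℕ) + 1 - i ≠ 0)]

lemma dGamma_one_apply (k i : ℕ) (j : Fin k) :
    dGamma k i 1 j = (((j : ℕ) + 1).descFactorial i : ℝ) := by
  simp [dGamma]

section

variable {R : Type*} [CommRing R]

lemma det_vandermonde_id_eq_prod_factorial (m : ℕ) :
    (vandermonde fun i : Fin m => (i : R)).det = ∏ i ∈ range m, (i ! : R) := by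
  cases m with
  | zero => simp
  | succ m =>
    rw [det_vandermonde_id_eq_superFactorial, ← prod_range_succ_factorial, Nat.cast_prod]

variable [Nontrivial R] [NoZeroDivisors R]

lemma det_descFactorial_eq_det_vandermonde {m : ℕ} (v : Fin m → ℕ) :
    (of fun s t : Fin m => ((v t).descFactorial s : R)).det =
      (vandermonde fun t => (v t : R)).det := by
  rw [← det_transpose, det_eval_matrixOfPolynomials_eq_det_vandermonde _
    (fun s => descPochhammer R s) (descPochhammer_natDegree R ·) (monic_descPochhammer R ·)]
  simp only [descPochhammer_eval_eq_descFactorial]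
  rfl

lemma det_succ_descFactorial_succ (n m : ℕ) :
    (of fun s t : Fin m => ((n + t + 1).descFactorial (s + 1) : R)).det =
      ((n + m).choose m * sf m : ℕ) := by
  let v : Fin m → R := fun t => ((n + t + 1 : ℕ) : R)
  let A : Matrix (Fin m) (Fin m) R := of fun s t => ((n + t).descFactorial s : R)
  have hfactor : (of fun s t : Fin m => ((n + t + 1).descFactorial (s + 1) : R)) =
      of fun s t => v t * A s t := by
    ext s t
    rw [of_apply, of_apply, succ_descFactorial_succ, Nat.cast_mul]
    rfl
  have hrising : ∏ t ∈ range m, (t + n + 1) = m ! * (n + m).choose m := by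
    rw [← ascFactorial_eq_factorial_mul_choose, ascFactorial_eq_prod_range]
    exact prod_congr rfl fun t _ => by ring
  rw [hfactor, det_mul_row, det_descFactorial_eq_det_vandermonde]
  simp only [v, Nat.cast_add, add_comm (n : R), det_vandermonde_add,
    det_vandermonde_id_eq_prod_factorial]
  norm_cast
  rw [Fin.prod_univ_eq_prod_range (fun t => t + n + 1), hrising, ← prod_range_succ_factorial,
    prod_range_succ]
  push_cast
  ring

end

noncomputable def momentDerivMatrix (k l : ℕ) : Matrix (Fin k) (Fin k) ℝ :=
  of fun r c => if (r : ℕ) < l then dGamma k ((r : ℕ) + 1) 0 c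
    else dGamma k ((r : ℕ) - l + 1) 1 c

lemma momentDerivMatrix_submatrix_finSumFinEquiv (l m : ℕ) :
    (momentDerivMatrix (l + m) l).submatrix finSumFinEquiv finSumFinEquiv =
      fromBlocks (diagonal fun r : Fin l => (((r : ℕ) + 1)! : ℝ)) 0
        (of fun (s : Fin m) (c : Fin l) => (((c : ℕ) + 1).descFactorial ((s : ℕ) + 1) : ℝ))
        (of fun s t : Fin m => ((l + t + 1).descFactorial (s + 1) : ℝ)) := by
  ext (r | s) (c | t)
  · simp [momentDerivMatrix, dGamma_zero_apply, diagonal_apply, Fin.ext_iff, eq_comm]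
  · have hoff : l + (t : ℕ) ≠ r := by omega
    simp [momentDerivMatrix, dGamma_zero_apply, hoff]
  · simp [momentDerivMatrix, dGamma_one_apply]
  · simp [momentDerivMatrix, dGamma_one_apply]

lemma det_momentDerivMatrix (l m : ℕ) :
    (momentDerivMatrix (l + m) l).det = (sf l : ℝ) * ((l + m).choose m * sf m : ℕ) := by
  rw [← det_submatrix_equiv_self finSumFinEquiv, momentDerivMatrix_submatrix_finSumFinEquiv,
    det_fromBlocks_zero₁₂, det_diagonal, det_succ_descFactorial_succ,
    Fin.prod_univ_eq_prod_range (fun r => ((r + 1)! : ℝ)), ← Nat.cast_prod,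
    prod_range_factorial_succ]

theorem moment_curve_det_zero_one_general (k l : ℕ) (hl : l ≤ k) :
    |(Matrix.of (fun r c : Fin k =>
        if (r : ℕ) < l then dGamma k ((r : ℕ) + 1) (0 : ℝ) c
        else dGamma k ((r : ℕ) - l + 1) (1 : ℝ) c)).det|
      = (Nat.choose k l : ℝ) * (∏ i ∈ Finset.Icc 1 l, (Nat.factorial i : ℝ))
          * (∏ j ∈ Finset.Icc 1 (k - l), (Nat.factorial j : ℝ)) := by
  obtain ⟨m, rfl⟩ := Nat.exists_eq_add_of_le hl
  change |(momentDerivMatrix (l + m) l).det| = _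
  rw [det_momentDerivMatrix, abs_of_nonneg (by positivity), Nat.add_sub_cancel_left,
    ← Nat.cast_prod, ← Nat.cast_prod, prod_Icc_factorial, prod_Icc_factorial, choose_symm_add]
  push_cast
  ring

/-- The determinant of the `k×k` matrix with rows
`∂¹Γ(0), …, ∂ˡΓ(0), ∂¹Γ(1), …, ∂^{k-l}Γ(1)` has absolute value
`C(k,l) ⋅ (∏_{i=1}^l i!) ⋅ (∏_{j=1}^{k-l} j!)`. -/
theorem moment_curve_det_zero_one (k l : ℕ) (hk : 1 ≤ k) (hl : l ≤ k) :
    |(Matrix.of (fun r c : Fin k =>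
        if (r : ℕ) < l then dGamma k ((r : ℕ) + 1) (0 : ℝ) c
        else dGamma k ((r : ℕ) - l + 1) (1 : ℝ) c)).det|
      = (Nat.choose k l : ℝ) * (∏ i ∈ Finset.Icc 1 l, (Nat.factorial i : ℝ))
          * (∏ j ∈ Finset.Icc 1 (k - l), (Nat.factorial j : ℝ)) :=
  moment_curve_det_zero_one_general k l hl
end

section
/- With p_l := l(l+1) for integers l, for every 1 ≤ l < k the point (p_l, p_k − p_l) in ℝ² is the convex combination θ_l · (p_k − p_{k−l}, p_{k−l}) + (1 − θ_l) · (p_{l−1}, p_k − p_{l−1}) with θ_l = 1/(k−l+1), and moreover 0 < θ_l ≤ 1. -/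
/-- With `p_l = l(l+1)`, for `1 ≤ l < k` the point `(p_l, p_k - p_l)` is the convex
combination `θ_l (p_k - p_{k-l}, p_{k-l}) + (1 - θ_l)(p_{l-1}, p_k - p_{l-1})` with
`θ_l = 1/(k-l+1)`, and `0 < θ_l ≤ 1`. -/
theorem critical_exponent_convex_combination (k l : ℕ) (hk : 2 ≤ k) (hl : 1 ≤ l)
    (hlk : l < k) :
    (letI p : ℕ → ℝ := fun m => (m : ℝ) * ((m : ℝ) + 1)
     letI θ : ℝ := 1 / ((k : ℝ) - (l : ℝ) + 1)
     ((p l, p k - p l) : ℝ × ℝ)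
        = θ • ((p k - p (k - l), p (k - l)) : ℝ × ℝ)
            + (1 - θ) • ((p (l - 1), p k - p (l - 1)) : ℝ × ℝ))
    ∧ 0 < 1 / ((k : ℝ) - (l : ℝ) + 1) ∧ 1 / ((k : ℝ) - (l : ℝ) + 1) ≤ 1 := by
  have hkl : (l : ℝ) ≤ (k : ℝ) := by exact_mod_cast hlk.le
  have hpos : (0 : ℝ) < (k : ℝ) - (l : ℝ) + 1 := by linarith
  refine ⟨?_, by positivity, ?_⟩
  · have h1 : ((k - l : ℕ) : ℝ) = (k : ℝ) - l := by
      rw [Nat.cast_sub hlk.le]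
    have h2 : ((l - 1 : ℕ) : ℝ) = (l : ℝ) - 1 := by
      rw [Nat.cast_sub hl]; norm_num
    simp only [Prod.ext_iff, Prod.smul_mk, Prod.mk_add_mk, smul_eq_mul, h1, h2]
    constructor <;> field_simp <;> ring
  · rw [div_le_one hpos]
    have h3 : (l:ℝ) + 1 ≤ (k:ℝ) := by exact_mod_cast hlk
    linarith
end

section
/- Suppose real numbers A₀, A₁, ..., A_{k−1} satisfy A_l ≥ (1/l)·A_{k−l} + ((k−l)/(k−l+1))·A_{l−1} for every l = 1, ..., k−1. Then 0 ≥ ((k−1)/k)·A₀. In particular, if additionally A₀ ≥ 0, then A₀ = 0. -/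
/-!
Sum the inequalities over `l = 1, …, k-1`. After reflecting `l ↦ k - l` in the first term and
shifting `l ↦ l - 1` in the second, each `A_l` with `0 < l < k` appears on the right with total
weight `1/(k-l) + (k-l-1)/(k-l) = 1`, and `A_0` with weight `(k-1)/k`. So the sum of the `A_l`
cancels from both sides and leaves `0 ≥ ((k-1)/k) A_0`.
-/

open Finset

theorem Finset.sum_Ioo_zero_reflect {M : Type*} [AddCommMonoid M] (k : ℕ) (f : ℕ → M) :
    ∑ l ∈ Ioo 0 k, f (k - l) = ∑ l ∈ Ioo 0 k, f l :=
  sum_nbij' (k - ·) (k - ·) (by intro l; simp; omega) (by intro l; simp; omega)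
    (by intro l; simp; omega) (by intro l; simp; omega) (fun _ _ => rfl)

theorem Finset.sum_Ioo_zero_pred {M : Type*} [AddCommMonoid M] {k : ℕ} {g : ℕ → M}
    (hg : g (k - 1) = 0) :
    ∑ l ∈ Ioo 0 k, g (l - 1) = g 0 + ∑ l ∈ Ioo 0 k, g l := by
  rcases k with _ | n
  · simpa using hg.symm
  rw [← Ico_add_one_left_eq_Ioo, sum_Ico_eq_sum_range, sum_Ico_eq_sum_range]
  simp only [add_tsub_cancel_right, zero_add, add_comm 1] at hg ⊢
  rw [add_comm (g 0), ← sum_range_succ', sum_range_succ, hg, add_zero]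

theorem sum_Ioo_iteration_bound_eq (k : ℕ) (A : ℕ → ℝ) :
    ∑ l ∈ Ioo 0 k, ((1 / (l : ℝ)) * A (k - l) + (((k : ℝ) - l) / ((k : ℝ) - l + 1)) * A (l - 1))
      = (((k : ℝ) - 1) / k) * A 0 + ∑ l ∈ Ioo 0 k, A l := by
  rcases Nat.eq_zero_or_pos k with rfl | hk
  · simp
  have reflect : ∑ l ∈ Ioo 0 k, (1 / (l : ℝ)) * A (k - l) = ∑ l ∈ Ioo 0 k, A l / (k - l) := by
    rw [← sum_Ioo_zero_reflect k]
    refine sum_congr rfl fun l hl => ?_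
    have hlk : l ≤ k := (mem_Ioo.1 hl).2.le
    rw [Nat.sub_sub_self hlk, Nat.cast_sub hlk, one_div_mul_eq_div]
  have shift : ∑ l ∈ Ioo 0 k, (((k : ℝ) - l) / ((k : ℝ) - l + 1)) * A (l - 1)
      = ((k : ℝ) - 1) / k * A 0 + ∑ l ∈ Ioo 0 k, ((k : ℝ) - l - 1) / (k - l) * A l := by
    set g : ℕ → ℝ := fun j => ((k : ℝ) - j - 1) / (k - j) * A j
    have hlast : g (k - 1) = 0 := by simp [g, Nat.cast_sub hk]
    calc _ = ∑ l ∈ Ioo 0 k, g (l - 1) := by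
          refine sum_congr rfl fun l hl => ?_
          simp only [g, Nat.cast_sub (mem_Ioo.1 hl).1]
          congr 2 <;> push_cast <;> ring
      _ = g 0 + ∑ l ∈ Ioo 0 k, g l := sum_Ioo_zero_pred hlast
      _ = _ := by simp [g]
  rw [sum_add_distrib, reflect, shift, add_left_comm, ← sum_add_distrib]
  congr 1
  refine sum_congr rfl fun l hl => ?_
  have hl : (l : ℝ) < k := by exact_mod_cast (mem_Ioo.1 hl).2
  field_simp [(sub_pos.2 hl).ne']
  ring

/-- If reals `A₀, …, A_{k-1}` satisfy `A_l ≥ (1/l) A_{k-l} + ((k-l)/(k-l+1)) A_{l-1}`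
for `l = 1, …, k-1`, then `0 ≥ ((k-1)/k) A₀`; in particular if `A₀ ≥ 0` then `A₀ = 0`. -/
theorem eigenvector_iteration (k : ℕ) (hk : 2 ≤ k) (A : ℕ → ℝ)
    (hA : ∀ l : ℕ, 1 ≤ l → l ≤ k - 1 →
      A l ≥ (1 / (l : ℝ)) * A (k - l) + (((k : ℝ) - (l : ℝ)) / ((k : ℝ) - (l : ℝ) + 1)) * A (l - 1)) :
    0 ≥ (((k : ℝ) - 1) / (k : ℝ)) * A 0 ∧ (0 ≤ A 0 → A 0 = 0) := by
  have summed := sum_le_sum fun l (hl : l ∈ Ioo 0 k) =>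
    hA l (mem_Ioo.1 hl).1 (Nat.le_sub_one_of_lt (mem_Ioo.1 hl).2)
  rw [sum_Ioo_iteration_bound_eq] at summed
  have hA0 : 0 ≥ (((k : ℝ) - 1) / k) * A 0 := by linarith
  have hcoeff : 0 < ((k : ℝ) - 1) / k := by
    have : (2 : ℝ) ≤ k := by exact_mod_cast hk
    apply div_pos <;> linarith
  exact ⟨hA0, fun h0 => le_antisymm (nonpos_of_mul_nonpos_right hA0 hcoeff) h0⟩
end
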